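/- Let H ≥ 2 and t ≥ 0 be integers. Then ∑_{b1=0}^{min(t,H−2)} [ C(H−2,b1)²·C(C(H−2,2), t−2·b1) + 2·∑_{b2=0}^{b1−1} C(H−2,b1)·C(H−2,b2)·C(C(H−2,2), t−b1−b2) ] = C(C(H,2)−1, t). -/
import Mathlib


open Finset

/-- Binomial coefficient `C(n, m)` with integer lower argument, with the
convention that it is `0` when `m < 0` (and, as usual, when `m > n`). -/
def chooseInt (n : ℕ) (m : ℤ) : ℕ := if 0 ≤ m then n.choose m.toNat else 0

lemma chooseInt_neg (n : ℕ) {m : ℤ} (h : m < 0) : chooseInt n m = 0 := by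
  simp [chooseInt, not_le.mpr h]

lemma chooseInt_ofNat (n k : ℕ) : chooseInt n (k : ℤ) = n.choose k := by
  simp [chooseInt]

lemma vander (n m t N : ℕ) (h : t < N) :
    (n + m).choose t = ∑ a ∈ Finset.range N, n.choose a * chooseInt m ((t:ℤ) - a) := by
  rw [Nat.add_choose_eq, Finset.Nat.sum_antidiagonal_eq_sum_range_succ_mk]
  apply Finset.sum_subset_zero_on_sdiff
  · exact Finset.range_subset_range.mpr h
  · intro a ha
    rw [Finset.mem_sdiff, Finset.mem_range, Finset.mem_range, not_lt] at ha
    rw [chooseInt_neg _ (by omega : (t:ℤ) - a < 0), mul_zero]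
  · intro a ha
    rw [Finset.mem_range] at ha
    have : ((t:ℤ) - a) = ((t - a : ℕ) : ℤ) := by omega
    rw [this, chooseInt_ofNat]

lemma sym_sum {f : ℕ → ℕ → ℕ} (hf : ∀ a b, f a b = f b a) (N : ℕ) :
    ∑ a ∈ Finset.range N, ∑ b ∈ Finset.range N, f a b
      = ∑ a ∈ Finset.range N, (f a a + 2 * ∑ b ∈ Finset.range a, f a b) := by
  induction N with
  | zero => simp
  | succ N ih =>
    rw [Finset.sum_range_succ]
    conv_lhs => rw [Finset.sum_range_succ]
    simp only [Finset.sum_range_succ]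
    rw [Finset.sum_add_distrib, ih]
    have : ∑ a ∈ Finset.range N, f a N = ∑ b ∈ Finset.range N, f N b :=
      Finset.sum_congr rfl fun a _ => hf a N
    rw [this]
    ring

theorem stmt_6 (H t : ℕ) (hH : 2 ≤ H) :
    ∑ b1 ∈ Finset.range (min t (H - 2) + 1),
      (((H - 2).choose b1) ^ 2 * chooseInt ((H - 2).choose 2) ((t : ℤ) - 2 * b1)
        + 2 * ∑ b2 ∈ Finset.range b1,
            (H - 2).choose b1 * (H - 2).choose b2 *
              chooseInt ((H - 2).choose 2) ((t : ℤ) - b1 - b2))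
      = (H.choose 2 - 1).choose t := by
  set n := H - 2 with hn
  set m := n.choose 2 with hm
  -- rewrite RHS
  have hH2 : H.choose 2 - 1 = n + (n + m) := by
    obtain ⟨k, rfl⟩ : ∃ k, H = k + 2 := ⟨H - 2, by omega⟩
    have : (k + 2).choose 2 = k.choose 2 + k + k + 1 := by
      rw [Nat.choose_succ_succ, Nat.choose_succ_succ, Nat.choose_succ_succ]
      simp [Nat.choose_zero_right, Nat.choose_one_right]
      ring
    simp only [hn, hm, Nat.add_sub_cancel] at *
    omega
  rw [hH2]
  -- double Vandermonde
  have key : (n + (n + m)).choose t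
      = ∑ a ∈ Finset.range (t+1), ∑ b ∈ Finset.range (t+1),
          n.choose a * n.choose b * chooseInt m ((t:ℤ) - a - b) := by
    rw [vander n (n+m) t (t+1) (Nat.lt_succ_self t)]
    apply Finset.sum_congr rfl
    intro a ha
    rw [Finset.mem_range] at ha
    have hat : a ≤ t := by omega
    have h1 : ((t:ℤ) - a) = ((t - a : ℕ) : ℤ) := by omega
    rw [h1, chooseInt_ofNat, vander n m (t - a) (t+1) (by omega), Finset.mul_sum]
    apply Finset.sum_congr rfl
    intro b _
    have h2 : (((t - a : ℕ) : ℤ) - b) = (t:ℤ) - a - b := by omega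
    rw [h2]; ring
  rw [key]
  -- symmetric grouping
  have hsym : ∀ a b, n.choose a * n.choose b * chooseInt m ((t:ℤ) - a - b)
      = n.choose b * n.choose a * chooseInt m ((t:ℤ) - b - a) := by
    intro a b
    have : (t:ℤ) - a - b = (t:ℤ) - b - a := by ring
    rw [this]; ring
  rw [sym_sum hsym (t+1)]
  -- extend the LHS range
  apply Finset.sum_subset_zero_on_sdiff
  · exact Finset.range_subset_range.mpr (Nat.succ_le_succ (min_le_left t n))
  · intro b1 hb1
    rw [Finset.mem_sdiff, Finset.mem_range, Finset.mem_range, not_lt] at hb1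
    have hnb : n < b1 := by omega
    have hz : n.choose b1 = 0 := Nat.choose_eq_zero_of_lt hnb
    simp [hz]
  · intro b1 _
    congr 1
    · have : (t:ℤ) - 2 * b1 = (t:ℤ) - b1 - b1 := by ring
      rw [this, sq]
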